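/- arXiv:2012.02908 — 2 statements merged into one kernel-verified Lean document; each statement's English description precedes it below -/
import Mathlib

section
/- Let N ≥ 1, σ ∈ (1,2), α ∈ (0,1], 0 < γ ≤ Γ, C₀ > 0. Suppose A assigns to each (y,w) ∈ ℝ^N × S^{N-1} a symmetric N×N real matrix satisfying the ellipticity condition Γ^{-2/(N+σ)}|v|² ≤ vᵀA(y,w)v ≤ γ^{-2/(N+σ)}|v|² for all v, and the Hölder condition ‖A(y₁,w) - A(y₂,w)‖ ≤ C₀‖y₁ - y₂‖^α for all y₁, y₂ ∈ ℝ^N, w ∈ S^{N-1} (operator norm). Define K(y,z) = (zᵀ A(y, z/|z|) z)^{-(N+σ)/2} for z ≠ 0. Then there exists a constant C, depending only on N, σ, γ, Γ, C₀, such that |K(y₁,z) - K(y₂,z)| ≤ C ‖y₁ - y₂‖^α |z|^{-(N+σ)} for all y₁, y₂ ∈ ℝ^N and z ∈ ℝ^N \ {0}. -/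
open MeasureTheory Metric Set Filter

/-- The quadratic form `zᵀ A z` associated to a matrix `A`. -/
noncomputable def quadForm {N : ℕ} (A : Matrix (Fin N) (Fin N) ℝ)
    (z : EuclideanSpace ℝ (Fin N)) : ℝ :=
  dotProduct (WithLp.equiv 2 (Fin N → ℝ) z) (A.mulVec (WithLp.equiv 2 (Fin N → ℝ) z))

lemma auxMVT (p m : ℝ) (hp : 0 < p) (hm : 0 < m) {a b : ℝ} (ha : m ≤ a) (hb : m ≤ b) :
    |a ^ (-p) - b ^ (-p)| ≤ p * m ^ (-p - 1) * |a - b| := by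
  have key := Convex.norm_image_sub_le_of_norm_hasDerivWithin_le
    (f := fun x : ℝ => x ^ (-p)) (f' := fun x : ℝ => -p * x ^ (-p - 1)) (s := Ici m)
    (C := p * m ^ (-p - 1))
    (fun x hx => (Real.hasDerivAt_rpow_const (p := -p)
      (Or.inl (ne_of_gt (lt_of_lt_of_le hm hx)))).hasDerivWithinAt)
    (fun x hx => by
      have hx0 : (0:ℝ) < x := lt_of_lt_of_le hm hx
      have h1 : x ^ (-p - 1) ≤ m ^ (-p - 1) :=
        Real.rpow_le_rpow_of_nonpos hm hx (by linarith)
      have h2 : (0:ℝ) ≤ x ^ (-p - 1) := (Real.rpow_pos_of_pos hx0 _).le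
      rw [Real.norm_eq_abs, abs_mul, abs_neg, abs_of_pos hp, abs_of_nonneg h2]
      exact mul_le_mul_of_nonneg_left h1 hp.le)
    (convex_Ici m) hb ha
  simpa [Real.norm_eq_abs, abs_sub_comm] using key

lemma auxQuadInner {N : ℕ} (M : Matrix (Fin N) (Fin N) ℝ) (z : EuclideanSpace ℝ (Fin N)) :
    quadForm M z = inner ℝ z (Matrix.toEuclideanCLM (𝕜 := ℝ) M z) := by
  simp [quadForm, PiLp.inner_apply, dotProduct, Matrix.toLin'_apply]
  exact Finset.sum_congr rfl (fun i _ => mul_comm _ _)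

lemma auxQuadBound {N : ℕ} (M : Matrix (Fin N) (Fin N) ℝ) (z : EuclideanSpace ℝ (Fin N)) :
    |quadForm M z| ≤ ‖Matrix.toEuclideanCLM (𝕜 := ℝ) M‖ * ‖z‖ ^ 2 := by
  rw [auxQuadInner]
  calc |inner ℝ z (Matrix.toEuclideanCLM (𝕜 := ℝ) M z)|
      ≤ ‖z‖ * ‖Matrix.toEuclideanCLM (𝕜 := ℝ) M z‖ := abs_real_inner_le_norm _ _
    _ ≤ ‖z‖ * (‖Matrix.toEuclideanCLM (𝕜 := ℝ) M‖ * ‖z‖) := by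
        exact mul_le_mul_of_nonneg_left ((Matrix.toEuclideanCLM (𝕜 := ℝ) M).le_opNorm z)
          (norm_nonneg z)
    _ = ‖Matrix.toEuclideanCLM (𝕜 := ℝ) M‖ * ‖z‖ ^ 2 := by ring

lemma auxQuadSub {N : ℕ} (M M' : Matrix (Fin N) (Fin N) ℝ) (z : EuclideanSpace ℝ (Fin N)) :
    quadForm M z - quadForm M' z = quadForm (M - M') z := by
  simp [quadForm, Matrix.sub_mulVec, dotProduct_sub]

/-- Hölder continuity in `y` of the kernel `K(y,z) = (zᵀA(y,ẑ)z)^{-(N+σ)/2}` when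
the matrix family `A` is uniformly elliptic and `α`-Hölder in `y` (operator norm):
`|K(y₁,z) - K(y₂,z)| ≤ C‖y₁ - y₂‖^α |z|^{-(N+σ)}` with `C = C(N,σ,γ,Γ,C₀)`. -/
theorem stmt9 (N : ℕ) (hN : 1 ≤ N) (σ γ Γ C₀ : ℝ) (hσ₁ : 1 < σ) (hσ₂ : σ < 2)
    (hγ : 0 < γ) (hγΓ : γ ≤ Γ) (hC₀ : 0 < C₀) :
    ∃ C : ℝ, ∀ (α : ℝ), 0 < α → α ≤ 1 →
      ∀ A : EuclideanSpace ℝ (Fin N) → EuclideanSpace ℝ (Fin N) → Matrix (Fin N) (Fin N) ℝ,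
      (∀ y w, ‖w‖ = 1 → (A y w).IsSymm) →
      (∀ y w, ‖w‖ = 1 → ∀ v : EuclideanSpace ℝ (Fin N),
        Γ ^ (-(2 : ℝ) / ((N : ℝ) + σ)) * ‖v‖ ^ 2 ≤ quadForm (A y w) v ∧
        quadForm (A y w) v ≤ γ ^ (-(2 : ℝ) / ((N : ℝ) + σ)) * ‖v‖ ^ 2) →
      (∀ y₁ y₂ w, ‖w‖ = 1 →
        ‖Matrix.toEuclideanCLM (𝕜 := ℝ) (A y₁ w - A y₂ w)‖ ≤ C₀ * ‖y₁ - y₂‖ ^ α) →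
      ∀ K : EuclideanSpace ℝ (Fin N) → EuclideanSpace ℝ (Fin N) → ℝ,
      (∀ y z, z ≠ 0 → K y z = (quadForm (A y (‖z‖⁻¹ • z)) z) ^ (-((N : ℝ) + σ) / 2)) →
      ∀ y₁ y₂ (z : EuclideanSpace ℝ (Fin N)), z ≠ 0 →
        |K y₁ z - K y₂ z| ≤ C * ‖y₁ - y₂‖ ^ α * ‖z‖ ^ (-((N : ℝ) + σ)) := by
  have hNσ : (0:ℝ) < (N : ℝ) + σ := by positivity
  set p : ℝ := ((N : ℝ) + σ) / 2 with hp_def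
  have hp : 0 < p := by positivity
  set c : ℝ := Γ ^ (-(2 : ℝ) / ((N : ℝ) + σ)) with hc_def
  have hΓ : 0 < Γ := lt_of_lt_of_le hγ hγΓ
  have hc : 0 < c := Real.rpow_pos_of_pos hΓ _
  refine ⟨p * c ^ (-p - 1) * C₀, ?_⟩
  intro α hα hα1 A hsymm hell hhold K hK y₁ y₂ z hz
  set w : EuclideanSpace ℝ (Fin N) := ‖z‖⁻¹ • z with hw_def
  have hz0 : (0:ℝ) < ‖z‖ := norm_pos_iff.mpr hz
  have hw : ‖w‖ = 1 := by
    rw [hw_def, norm_smul, norm_inv, norm_norm, inv_mul_cancel₀ hz0.ne']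
  set Q₁ : ℝ := quadForm (A y₁ w) z with hQ1
  set Q₂ : ℝ := quadForm (A y₂ w) z with hQ2
  set m : ℝ := c * ‖z‖ ^ 2 with hm_def
  have hm : 0 < m := by positivity
  have hQ₁m : m ≤ Q₁ := (hell y₁ w hw z).1
  have hQ₂m : m ≤ Q₂ := (hell y₂ w hw z).1
  have hdiff : |Q₁ - Q₂| ≤ C₀ * ‖y₁ - y₂‖ ^ α * ‖z‖ ^ 2 := by
    rw [hQ1, hQ2, auxQuadSub]
    calc |quadForm (A y₁ w - A y₂ w) z|
        ≤ ‖Matrix.toEuclideanCLM (𝕜 := ℝ) (A y₁ w - A y₂ w)‖ * ‖z‖ ^ 2 := auxQuadBound _ _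
      _ ≤ C₀ * ‖y₁ - y₂‖ ^ α * ‖z‖ ^ 2 :=
          mul_le_mul_of_nonneg_right (hhold y₁ y₂ w hw) (by positivity)
  have hKrw : K y₁ z - K y₂ z = Q₁ ^ (-p) - Q₂ ^ (-p) := by
    rw [hK y₁ z hz, hK y₂ z hz, hQ1, hQ2, hp_def, neg_div]
  have hmvt := auxMVT p m hp hm hQ₁m hQ₂m
  have hm_pow : m ^ (-p - 1) = c ^ (-p - 1) * ‖z‖ ^ (2 * (-p - 1)) := by
    rw [hm_def, Real.mul_rpow hc.le (by positivity)]
    congr 1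
    rw [← Real.rpow_natCast ‖z‖ 2, ← Real.rpow_mul (norm_nonneg z)]
    norm_num
  calc |K y₁ z - K y₂ z| = |Q₁ ^ (-p) - Q₂ ^ (-p)| := by rw [hKrw]
    _ ≤ p * m ^ (-p - 1) * |Q₁ - Q₂| := hmvt
    _ ≤ p * m ^ (-p - 1) * (C₀ * ‖y₁ - y₂‖ ^ α * ‖z‖ ^ 2) := by
        apply mul_le_mul_of_nonneg_left hdiff
        positivity
    _ = p * c ^ (-p - 1) * C₀ * ‖y₁ - y₂‖ ^ α *
          (‖z‖ ^ (2 * (-p - 1)) * ‖z‖ ^ 2) := by rw [hm_pow]; ring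
    _ = p * c ^ (-p - 1) * C₀ * ‖y₁ - y₂‖ ^ α * ‖z‖ ^ (-((N : ℝ) + σ)) := by
        congr 1
        rw [← Real.rpow_natCast ‖z‖ 2, ← Real.rpow_add hz0]
        congr 1
        rw [hp_def]
        push_cast
        ring
end

section
/- Let N ≥ 1, β ∈ (0,1], M ≥ 0, and let φ : ℝ^N → ℝ be differentiable with ∇φ β-Hölder with constant M. Then for every s ∈ [0,1] and all x₁, x₂, z ∈ ℝ^N, |φ(x₁+z) - φ(x₁) - (φ(x₂+z) - φ(x₂))| ≤ M · ‖x₁ - x₂‖^{sβ + 1 - s} · ‖z‖^{s + β(1-s)}. -/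
open MeasureTheory Metric Set Filter

private lemma line_deriv {N : ℕ} (φ : EuclideanSpace ℝ (Fin N) → ℝ)
    (hφdiff : Differentiable ℝ φ) (x v : EuclideanSpace ℝ (Fin N)) (t : ℝ) :
    HasDerivAt (fun t : ℝ => φ (x + t • v))
      (inner ℝ (gradient φ (x + t • v)) v : ℝ) t := by
  have hline : HasDerivAt (fun t : ℝ => x + t • v) v t := by
    simpa using ((hasDerivAt_id t).smul_const v).const_add x
  have := ((hφdiff (x + t • v)).hasGradientAt.hasFDerivAt).comp_hasDerivAt t hline
  simpa [Function.comp_def] using this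

private lemma base_bound {N : ℕ} (β M : ℝ) (hβ₁ : 0 < β) (hM : 0 ≤ M)
    (φ : EuclideanSpace ℝ (Fin N) → ℝ)
    (hφdiff : Differentiable ℝ φ)
    (hφgrad : ∀ a b, ‖gradient φ a - gradient φ b‖ ≤ M * ‖a - b‖ ^ β)
    (x w z : EuclideanSpace ℝ (Fin N)) :
    |φ (x + w + z) - φ (x + w) - (φ (x + z) - φ x)| ≤ M * ‖w‖ ^ β * ‖z‖ := by
  set g : ℝ → ℝ := fun t => φ (x + w + t • z) - φ (x + t • z) with hg
  have hgd : ∀ t ∈ Icc (0:ℝ) 1,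
      HasDerivWithinAt g
        ((inner ℝ (gradient φ (x + w + t • z)) z : ℝ) -
          (inner ℝ (gradient φ (x + t • z)) z : ℝ)) (Icc 0 1) t := by
    intro t _
    exact ((line_deriv φ hφdiff (x + w) z t).sub (line_deriv φ hφdiff x z t)).hasDerivWithinAt
  have hbd : ∀ t ∈ Ico (0:ℝ) 1,
      ‖(inner ℝ (gradient φ (x + w + t • z)) z : ℝ) -
          (inner ℝ (gradient φ (x + t • z)) z : ℝ)‖ ≤ M * ‖w‖ ^ β * ‖z‖ := by
    intro t _
    rw [← inner_sub_left]
    calc ‖(inner ℝ (gradient φ (x + w + t • z) - gradient φ (x + t • z)) z : ℝ)‖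
        ≤ ‖gradient φ (x + w + t • z) - gradient φ (x + t • z)‖ * ‖z‖ :=
          norm_inner_le_norm _ _
      _ ≤ M * ‖w‖ ^ β * ‖z‖ := by
          apply mul_le_mul_of_nonneg_right _ (norm_nonneg z)
          have := hφgrad (x + w + t • z) (x + t • z)
          simpa [add_right_comm, add_sub_add_right_eq_sub, add_sub_cancel_left] using this
  have := norm_image_sub_le_of_norm_deriv_le_segment' hgd hbd 1 (by norm_num)
  simp only [hg, one_smul, zero_smul, add_zero] at this
  calc |φ (x + w + z) - φ (x + w) - (φ (x + z) - φ x)|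
      = ‖(φ (x + w + z) - φ (x + z)) - (φ (x + w) - φ x)‖ := by
        rw [Real.norm_eq_abs]; ring_nf
    _ ≤ M * ‖w‖ ^ β * ‖z‖ * (1 - 0) := this
    _ = M * ‖w‖ ^ β * ‖z‖ := by ring

/-- interpolated bound on the mixed second difference of a function with
`β`-Hölder gradient: for `s ∈ [0,1]`,
`|φ(x₁+z) - φ(x₁) - (φ(x₂+z) - φ(x₂))| ≤ M·‖x₁-x₂‖^{sβ+1-s}·‖z‖^{s+β(1-s)}`. -/
theorem stmt12 (N : ℕ) (hN : 1 ≤ N) (β M : ℝ) (hβ₁ : 0 < β) (hβ₂ : β ≤ 1) (hM : 0 ≤ M)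
    (φ : EuclideanSpace ℝ (Fin N) → ℝ)
    (hφdiff : Differentiable ℝ φ)
    (hφgrad : ∀ a b, ‖gradient φ a - gradient φ b‖ ≤ M * ‖a - b‖ ^ β) :
    ∀ (s : ℝ), 0 ≤ s → s ≤ 1 →
      ∀ x₁ x₂ z : EuclideanSpace ℝ (Fin N),
        |φ (x₁ + z) - φ x₁ - (φ (x₂ + z) - φ x₂)| ≤
          M * ‖x₁ - x₂‖ ^ (s * β + 1 - s) * ‖z‖ ^ (s + β * (1 - s)) := by
  intro s hs0 hs1 x₁ x₂ z
  set δ := |φ (x₁ + z) - φ x₁ - (φ (x₂ + z) - φ x₂)| with hδ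
  have hδ0 : 0 ≤ δ := abs_nonneg _
  have hA : δ ≤ M * ‖x₁ - x₂‖ ^ β * ‖z‖ := by
    have := base_bound β M hβ₁ hM φ hφdiff hφgrad x₂ (x₁ - x₂) z
    simpa [add_sub_cancel] using this
  have hB : δ ≤ M * ‖z‖ ^ β * ‖x₁ - x₂‖ := by
    have := base_bound β M hβ₁ hM φ hφdiff hφgrad x₂ z (x₁ - x₂)
    have heq : |φ (x₂ + z + (x₁ - x₂)) - φ (x₂ + z) - (φ (x₂ + (x₁ - x₂)) - φ x₂)| = δ := by
      rw [hδ]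
      have h1 : x₂ + z + (x₁ - x₂) = x₁ + z := by abel
      have h2 : x₂ + (x₁ - x₂) = x₁ := by abel
      rw [h1, h2]
      congr 1
      ring
    rwa [heq] at this
  have hAn : 0 ≤ M * ‖x₁ - x₂‖ ^ β * ‖z‖ :=
    mul_nonneg (mul_nonneg hM (Real.rpow_nonneg (norm_nonneg _) β)) (norm_nonneg _)
  have hBn : 0 ≤ M * ‖z‖ ^ β * ‖x₁ - x₂‖ :=
    mul_nonneg (mul_nonneg hM (Real.rpow_nonneg (norm_nonneg _) β)) (norm_nonneg _)
  have key : δ ≤ (M * ‖x₁ - x₂‖ ^ β * ‖z‖) ^ s * (M * ‖z‖ ^ β * ‖x₁ - x₂‖) ^ (1 - s) := by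
    calc δ = δ ^ s * δ ^ (1 - s) := by
          rw [← Real.rpow_add' hδ0 (by norm_num), add_sub_cancel, Real.rpow_one]
      _ ≤ (M * ‖x₁ - x₂‖ ^ β * ‖z‖) ^ s * (M * ‖z‖ ^ β * ‖x₁ - x₂‖) ^ (1 - s) :=
          mul_le_mul (Real.rpow_le_rpow hδ0 hA hs0)
            (Real.rpow_le_rpow hδ0 hB (by linarith))
            (Real.rpow_nonneg hδ0 _) (Real.rpow_nonneg hAn _)
  refine key.trans_eq ?_
  have hx : (0:ℝ) ≤ ‖x₁ - x₂‖ := norm_nonneg _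
  have hz : (0:ℝ) ≤ ‖z‖ := norm_nonneg _
  have hMc : M ^ s * M ^ (1 - s) = M := by
    rw [← Real.rpow_add' hM (by norm_num)]; norm_num
  have hxc : ‖x₁ - x₂‖ ^ (β * s) * ‖x₁ - x₂‖ ^ (1 - s) = ‖x₁ - x₂‖ ^ (s * β + 1 - s) := by
    rw [← Real.rpow_add' hx (ne_of_gt (by nlinarith))]
    congr 1; ring
  have hzc : ‖z‖ ^ s * ‖z‖ ^ (β * (1 - s)) = ‖z‖ ^ (s + β * (1 - s)) := by
    rw [← Real.rpow_add' hz (ne_of_gt (by nlinarith))]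
  calc (M * ‖x₁ - x₂‖ ^ β * ‖z‖) ^ s * (M * ‖z‖ ^ β * ‖x₁ - x₂‖) ^ (1 - s)
      = (M ^ s * M ^ (1 - s)) * (‖x₁ - x₂‖ ^ (β * s) * ‖x₁ - x₂‖ ^ (1 - s)) *
          (‖z‖ ^ s * ‖z‖ ^ (β * (1 - s))) := by
        rw [Real.mul_rpow (mul_nonneg hM (Real.rpow_nonneg hx β)) hz,
            Real.mul_rpow hM (Real.rpow_nonneg hx β),
            Real.mul_rpow (mul_nonneg hM (Real.rpow_nonneg hz β)) hx,
            Real.mul_rpow hM (Real.rpow_nonneg hz β),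
            ← Real.rpow_mul hx, ← Real.rpow_mul hz]
        ring
    _ = M * ‖x₁ - x₂‖ ^ (s * β + 1 - s) * ‖z‖ ^ (s + β * (1 - s)) := by
        rw [hMc, hxc, hzc]
end
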